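/- arXiv:2105.03205 — 4 statements merged into one kernel-verified Lean document; each statement's English description precedes it below -/
import Mathlib

section
/- Let k be a positive integer and P : Matrix (Fin k) (Fin k × Fin k) ℝ a product matrix, with multiplication μ_P(x,y) := P.mulVec (x ⊗ᵥ y). Then μ_P is associative (μ_P(μ_P(x,y), z) = μ_P(x, μ_P(y,z)) for all x, y, z) if and only if P * (P ⊗ₖ I_k) = P * (I_k ⊗ₖ P), where ⊗ₖ is the Kronecker product of matrices and the index identifications Fin k × (Fin k × Fin k) ≃ (Fin k × Fin k) × Fin k are the obvious ones (this is the semi-tensor product identity P² = P ⋉ (I_k ⊗ P)). -/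
/-!
Since `(A ⊗ₖ B) *ᵥ (x ⊗ᵥ y) = (A *ᵥ x) ⊗ᵥ (B *ᵥ y)`, the products `μ_P (μ_P (x, y), z)` and
`μ_P (x, μ_P (y, z))` are the matrices `P * (P ⊗ₖ 1)` and `P * (1 ⊗ₖ P)` applied to
`x ⊗ᵥ y ⊗ᵥ z`. Two matrices agreeing on all such vectors agree on the standard basis
`eₐ ⊗ᵥ e_b ⊗ᵥ e_c = e_(a,b,c)`, hence are equal.
-/

namespace Matrix

open scoped Kronecker

variable {R l m n p : Type*}

def kroneckerVec [Mul R] (x : m → R) (y : n → R) : m × n → R := fun i => x i.1 * y i.2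

infixr:100 " ⊗ᵥ " => kroneckerVec

theorem kroneckerVec_assoc [Semigroup R] (x : l → R) (y : m → R) (z : n → R) :
    (x ⊗ᵥ y) ⊗ᵥ z = (x ⊗ᵥ y ⊗ᵥ z) ∘ Equiv.prodAssoc l m n :=
  funext fun _ => mul_assoc _ _ _

theorem single_one_kroneckerVec_single_one [MulZeroOneClass R] [DecidableEq m] [DecidableEq n]
    (a : m) (b : n) : Pi.single a (1 : R) ⊗ᵥ Pi.single b 1 = Pi.single (a, b) 1 := by
  ext ⟨i, j⟩
  by_cases hi : i = a <;> by_cases hj : j = b <;> simp [kroneckerVec, hi, hj]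

theorem kronecker_mulVec_kroneckerVec [CommSemiring R] [Fintype m] [Fintype n]
    (A : Matrix l m R) (B : Matrix p n R) (x : m → R) (y : n → R) :
    (A ⊗ₖ B) *ᵥ (x ⊗ᵥ y) = (A *ᵥ x) ⊗ᵥ (B *ᵥ y) := by
  ext ⟨i, j⟩
  simp only [kroneckerVec, mulVec, dotProduct, kroneckerMap_apply, Fintype.sum_prod_type,
    Finset.sum_mul_sum]
  exact Finset.sum_congr rfl fun _ _ => Finset.sum_congr rfl fun _ _ => by ring

theorem ext_of_mulVec_kroneckerVec_kroneckerVec [NonAssocSemiring R] [Fintype l] [Fintype m]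
    [Fintype n] [DecidableEq l] [DecidableEq m] [DecidableEq n] {A B : Matrix p (l × m × n) R}
    (h : ∀ x y z, A *ᵥ (x ⊗ᵥ y ⊗ᵥ z) = B *ᵥ (x ⊗ᵥ y ⊗ᵥ z)) : A = B :=
  ext_of_mulVec_single fun ⟨a, b, c⟩ => by
    simpa only [single_one_kroneckerVec_single_one] using
      h (Pi.single a 1) (Pi.single b 1) (Pi.single c 1)

section ProductMatrix

variable [CommSemiring R] [Fintype n] [DecidableEq n] (P : Matrix n (n × n) R) (x y z : n → R)

theorem mulVec_mulVec_kroneckerVec_kroneckerVec :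
    P *ᵥ ((P *ᵥ (x ⊗ᵥ y)) ⊗ᵥ z) =
      (P * (P ⊗ₖ (1 : Matrix n n R))).submatrix id (Equiv.prodAssoc n n n).symm *ᵥ
        (x ⊗ᵥ y ⊗ᵥ z) := by
  rw [submatrix_mulVec_equiv, Equiv.symm_symm, ← kroneckerVec_assoc, ← mulVec_mulVec,
    kronecker_mulVec_kroneckerVec, one_mulVec, Function.comp_id]

theorem mulVec_kroneckerVec_mulVec_kroneckerVec :
    P *ᵥ (x ⊗ᵥ (P *ᵥ (y ⊗ᵥ z))) =
      (P * ((1 : Matrix n n R) ⊗ₖ P)) *ᵥ (x ⊗ᵥ y ⊗ᵥ z) := by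
  rw [← mulVec_mulVec, kronecker_mulVec_kroneckerVec, one_mulVec]

end ProductMatrix

end Matrix

theorem productMatrix_associative_iff_general (k : ℕ)
    (P : Matrix (Fin k) (Fin k × Fin k) ℝ) :
    ((∀ x y z : Fin k → ℝ,
        P.mulVec (fun p : Fin k × Fin k =>
          P.mulVec (fun q : Fin k × Fin k => x q.1 * y q.2) p.1 * z p.2) =
        P.mulVec (fun p : Fin k × Fin k =>
          x p.1 * P.mulVec (fun q : Fin k × Fin k => y q.1 * z q.2) p.2)) ↔
      (P * (Matrix.kronecker P (1 : Matrix (Fin k) (Fin k) ℝ))).submatrix id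
          (fun q : Fin k × (Fin k × Fin k) => ((q.1, q.2.1), q.2.2)) =
        P * (Matrix.kronecker (1 : Matrix (Fin k) (Fin k) ℝ) P)) := by
  refine Iff.trans (forall₃_congr fun x y z => ?_)
    ⟨Matrix.ext_of_mulVec_kroneckerVec_kroneckerVec, fun h x y z => congrArg (Matrix.mulVec · _) h⟩
  exact Eq.congr (Matrix.mulVec_mulVec_kroneckerVec_kroneckerVec P x y z)
    (Matrix.mulVec_kroneckerVec_mulVec_kroneckerVec P x y z)

/-- Associativity criterion: `μ_P` is associative iff `P ⋉ (P ⊗ I_k) = P ⋉ (I_k ⊗ P)`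
(the STP identity `P² = P ⋉ (I_k ⊗ P)`), with the obvious index identification. -/
theorem productMatrix_associative_iff (k : ℕ) (hk : 0 < k)
    (P : Matrix (Fin k) (Fin k × Fin k) ℝ) :
    ((∀ x y z : Fin k → ℝ,
        P.mulVec (fun p : Fin k × Fin k =>
          P.mulVec (fun q : Fin k × Fin k => x q.1 * y q.2) p.1 * z p.2) =
        P.mulVec (fun p : Fin k × Fin k =>
          x p.1 * P.mulVec (fun q : Fin k × Fin k => y q.1 * z q.2) p.2)) ↔
      (P * (Matrix.kronecker P (1 : Matrix (Fin k) (Fin k) ℝ))).submatrix id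
          (fun q : Fin k × (Fin k × Fin k) => ((q.1, q.2.1), q.2.2)) =
        P * (Matrix.kronecker (1 : Matrix (Fin k) (Fin k) ℝ) P)) :=
  productMatrix_associative_iff_general k P
end

section
/- Let A be a commutative ring that is an ℝ-algebra with finrank ℝ A = 2. Then A is isomorphic as an ℝ-algebra to exactly one of: the dual numbers DualNumber ℝ (= ℝ[X]/(X²)), the hyperbolic numbers ℝ × ℝ (with componentwise operations), or the complex numbers ℂ. Moreover no two of these three algebras are ℝ-algebra isomorphic to each other. -/
/-!
Choose `x ∉ ℝ`. Then `1, x` is a basis, so `x² = a x + b`, and completing the square gives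
`y ∉ ℝ` with `y² ∈ ℝ`; rescaling makes `y² ∈ {-1, 0, 1}`. The algebra map from `ℂ`, `ℝ[ε]`
or `ℝ × ℝ` sending `i`, `ε` or `(1, -1)` to `y` has range a subalgebra strictly larger than `ℝ`,
hence all of `A` (a 2-dimensional algebra has no other subalgebras), and is therefore bijective
by counting dimensions. The three models are told apart by nilpotents and zero divisors.
-/

open Module

section FinrankTwo

variable {K A : Type*} [Field K] [Ring A] [Algebra K A]

theorem AlgHom.bijective_of_finrank_eq_two {B : Type*} [Ring B] [Algebra K B]
    (hB : finrank K B = 2) (hA : finrank K A = 2) (f : B →ₐ[K] A) {b : B}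
    (hb : f b ∉ (⊥ : Subalgebra K A)) : Function.Bijective f := by
  have : FiniteDimensional K B := .of_finrank_eq_succ hB
  have : FiniteDimensional K A := .of_finrank_eq_succ hA
  have hsurj : Function.Surjective f := f.range_eq_top.mp <|
    ((Subalgebra.isSimpleOrder_of_finrank hA).eq_bot_or_eq_top _).resolve_left
      fun h ↦ hb (h ▸ f.mem_range_self b)
  exact ⟨(LinearMap.injective_iff_surjective_of_finrank_eq_finrank (f := f.toLinearMap)
    (hB.trans hA.symm)).mpr hsurj, hsurj⟩

theorem exists_mul_self_eq_smul_add_algebraMap (hA : finrank K A = 2) {x : A}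
    (hx : x ∉ (⊥ : Subalgebra K A)) : ∃ a b : K, x * x = a • x + algebraMap K A b := by
  have : Nontrivial A := nontrivial_of_finrank_eq_succ hA
  have hli : LinearIndependent K ![x, 1] := by
    refine linearIndependent_fin2.mpr ⟨one_ne_zero, fun a ha ↦ hx ?_⟩
    rw [show x = a • 1 by simpa using ha.symm]
    exact (⊥ : Subalgebra K A).smul_mem (one_mem _) a
  have hspan := hli.span_eq_top_of_card_eq_finrank (by simp [hA])
  rw [Matrix.range_cons, Matrix.range_cons, Matrix.range_empty, Set.union_empty] at hspan
  obtain ⟨a, b, hab⟩ := Submodule.mem_span_pair.mp (hspan ▸ Submodule.mem_top (x := x * x))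
  exact ⟨a, b, by rw [← hab, Algebra.algebraMap_eq_smul_one]⟩

theorem exists_notMem_bot_mul_self_eq_algebraMap (h2 : (2 : K) ≠ 0) (hA : finrank K A = 2) :
    ∃ y ∉ (⊥ : Subalgebra K A), ∃ c : K, y * y = algebraMap K A c := by
  have := Subalgebra.isSimpleOrder_of_finrank hA
  obtain ⟨x, -, hx⟩ := SetLike.exists_of_lt (bot_lt_top : (⊥ : Subalgebra K A) < ⊤)
  obtain ⟨a, b, hab⟩ := exists_mul_self_eq_smul_add_algebraMap hA hx
  refine ⟨x - (a / 2) • 1, fun hy ↦ hx ?_, b + (a / 2) ^ 2, ?_⟩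
  · simpa using add_mem hy ((⊥ : Subalgebra K A).smul_mem (one_mem _) (a / 2))
  · simp only [sub_mul, mul_sub, smul_mul_assoc, mul_smul_comm, one_mul,
      mul_one, hab, Algebra.algebraMap_eq_smul_one]
    match_scalars <;> field_simp <;> ring

end FinrankTwo

theorem exists_notMem_bot_mul_self_eq_neg_one_or_zero_or_one {A : Type*} [Ring A] [Algebra ℝ A]
    (hA : finrank ℝ A = 2) :
    ∃ y ∉ (⊥ : Subalgebra ℝ A), y * y = -1 ∨ y * y = 0 ∨ y * y = 1 := by
  obtain ⟨y, hy, c, hc⟩ := exists_notMem_bot_mul_self_eq_algebraMap two_ne_zero hA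
  rcases eq_or_ne c 0 with rfl | hc0
  · exact ⟨y, hy, .inr (.inl (by simp [hc]))⟩
  set t := (√|c|)⁻¹
  have ht : t ≠ 0 := by positivity
  have htt : t * t = |c|⁻¹ := by rw [← mul_inv, Real.mul_self_sqrt (abs_nonneg c)]
  refine ⟨t • y, ((⊥ : Subalgebra ℝ A).toSubmodule.smul_mem_iff ht).not.mpr hy, ?_⟩
  rw [smul_mul_smul_comm, hc, Algebra.smul_def, ← map_mul, htt]
  rcases hc0.lt_or_gt with hneg | hpos
  · left
    simp [abs_of_neg hneg, hc0]
  · right; right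
    simp [abs_of_pos hpos, hc0]

section Hyperbolic

variable {K A : Type*} [Field K] [Ring A] [Algebra K A] [NeZero (2 : K)]

/-- `(1, 0)` and `(0, 1)` go to the idempotents `(1 ± e) / 2`. -/
noncomputable def Prod.algHomOfMulSelfEqOne (e : A) (he : e * e = 1) : K × K →ₐ[K] A where
  toFun p := ((p.1 + p.2) / 2) • 1 + ((p.1 - p.2) / 2) • e
  map_one' := by
    simp only [Prod.fst_one, Prod.snd_one]
    match_scalars <;> field_simp <;> ring
  map_mul' p q := by
    simp only [Prod.fst_mul, Prod.snd_mul, add_mul, mul_add, smul_mul_smul_comm, one_mul,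
      mul_one, he]
    match_scalars <;> field_simp <;> ring
  map_zero' := by simp
  map_add' p q := by
    simp only [Prod.fst_add, Prod.snd_add]
    match_scalars <;> ring
  commutes' r := by
    simp only [show algebraMap K (K × K) r = (r, r) from rfl, Algebra.algebraMap_eq_smul_one]
    match_scalars <;> field_simp <;> ring

@[simp]
theorem Prod.algHomOfMulSelfEqOne_apply_one_neg_one (e : A) (he : e * e = 1) :
    Prod.algHomOfMulSelfEqOne (K := K) e he (1, -1) = e := by
  change ((1 + -1) / 2 : K) • (1 : A) + ((1 - -1) / 2 : K) • e = e
  simp [one_add_one_eq_two, div_self (two_ne_zero (α := K))]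

end Hyperbolic

theorem DualNumber.not_isReduced {R : Type*} [Semiring R] [Nontrivial R] :
    ¬ IsReduced (DualNumber R) :=
  fun _ ↦ one_ne_zero (congrArg TrivSqZeroExt.snd (isNilpotent_eps (R := R)).eq_zero)

/-- Classification of 2-dimensional PHAs: every commutative 2-dimensional ℝ-algebra
is ℝ-algebra isomorphic to exactly one of the dual numbers, the hyperbolic numbers
`ℝ × ℝ`, or the complex numbers; moreover these three are pairwise non-isomorphic. -/
theorem two_dimensional_pha_classification (A : Type) [CommRing A] [Algebra ℝ A]
    (h : Module.finrank ℝ A = 2) :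
    (Nonempty (A ≃ₐ[ℝ] DualNumber ℝ) ∨ Nonempty (A ≃ₐ[ℝ] (ℝ × ℝ)) ∨
      Nonempty (A ≃ₐ[ℝ] ℂ)) ∧
    IsEmpty (DualNumber ℝ ≃ₐ[ℝ] (ℝ × ℝ)) ∧
    IsEmpty (DualNumber ℝ ≃ₐ[ℝ] ℂ) ∧
    IsEmpty ((ℝ × ℝ) ≃ₐ[ℝ] ℂ) := by
  refine ⟨?_, ⟨fun f ↦ DualNumber.not_isReduced (isReduced_of_injective f f.injective)⟩,
    ⟨fun f ↦ DualNumber.not_isReduced (isReduced_of_injective f f.injective)⟩,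
    ⟨fun f ↦ have := f.injective.isDomain f; false_of_nontrivial_of_product_domain ℝ ℝ⟩⟩
  obtain ⟨y, hy, hsq | hsq | hsq⟩ := exists_notMem_bot_mul_self_eq_neg_one_or_zero_or_one h
  · let f := Complex.liftAux y hsq
    have hf := f.bijective_of_finrank_eq_two Complex.finrank_real_complex h
      (b := Complex.I) (by simpa [f] using hy)
    exact .inr (.inr ⟨(AlgEquiv.ofBijective f hf).symm⟩)
  · let f := DualNumber.lift ⟨(Algebra.ofId ℝ A, y), hsq, fun _ ↦ Commute.all _ _⟩
    have hf := f.bijective_of_finrank_eq_two (finrank_prod.trans (by simp)) h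
      (b := DualNumber.eps) (by simpa [f] using hy)
    exact .inl ⟨(AlgEquiv.ofBijective f hf).symm⟩
  · let f := Prod.algHomOfMulSelfEqOne (K := ℝ) y hsq
    have hf := f.bijective_of_finrank_eq_two (by simp) h (b := (1, -1)) (by simpa [f] using hy)
    exact .inr (.inl ⟨(AlgEquiv.ofBijective f hf).symm⟩)
end

section
/- Let a b c d e f p q r : ℝ and define the product matrix P : Matrix (Fin 3) (Fin 3 × Fin 3) ℝ of a commutative unital 3-dimensional algebra by: μ(e_0, x) = μ(x, e_0) = x for all x (e_0 is the unit), μ(e_1, e_1) = (a, b, c), μ(e_1, e_2) = μ(e_2, e_1) = (d, e, f), μ(e_2, e_2) = (p, q, r), where μ = μ_P is the multiplication defined by P and vectors are written in coordinates with respect to the standard basis e_0, e_1, e_2. Then μ_P is associative if and only if a = c*e + f² − b*f − c*r, d = c*q − e*f, and p = e² + f*q − b*q − e*r. -/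
/-!
Both sides of the associativity law are trilinear, so it suffices to compare them on triples of
basis vectors, where `μ_P(e_i, e_j)` is the column `(i, j)` of `P`. In the triternion table `e_0`
is a unit and the table is symmetric, so everything comes down to the associators
`(e_1 e_1) e_2 - e_1 (e_1 e_2)` and `(e_2 e_2) e_1 - e_2 (e_2 e_1)`. Three of their coordinates
are, up to sign, the defects of the three stated relations, and the remaining ones are linear
combinations of these defects.
-/

open Matrix

namespace Matrix

variable {ι R : Type*} [Fintype ι] [CommSemiring R]

def productMul (P : Matrix ι (ι × ι) R) : (ι → R) →ₗ[R] (ι → R) →ₗ[R] ι → R :=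
  LinearMap.mk₂ R (fun x y => P *ᵥ fun ij => x ij.1 * y ij.2)
    (fun x x' y => by rw [← mulVec_add]; congr 1; ext; simp [add_mul])
    (fun c x y => by rw [← mulVec_smul]; congr 1; ext; simp [mul_assoc])
    (fun x y y' => by rw [← mulVec_add]; congr 1; ext; simp [mul_add])
    (fun c x y => by rw [← mulVec_smul]; congr 1; ext; simp [mul_left_comm])

theorem productMul_apply (P : Matrix ι (ι × ι) R) (x y : ι → R) :
    productMul P x y = P *ᵥ fun ij => x ij.1 * y ij.2 := rfl

def IsAssociativeProduct (P : Matrix ι (ι × ι) R) : Prop :=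
  ∀ x y z, productMul P (productMul P x y) z = productMul P x (productMul P y z)

variable [DecidableEq ι]

theorem productMul_single_single (P : Matrix ι (ι × ι) R) (i j : ι) :
    productMul P (Pi.single i 1) (Pi.single j 1) = P.col (i, j) := by
  rw [productMul_apply, ← mulVec_single_one]
  congr 1
  ext ⟨k, l⟩
  simp only [Pi.single_apply, Prod.mk.injEq, ite_and]
  split_ifs <;> simp

theorem productMul_single_right (P : Matrix ι (ι × ι) R) (x : ι → R) (k : ι) :
    productMul P x (Pi.single k 1) = ∑ l, x l • P.col (l, k) := by
  conv_lhs => rw [← (Pi.basisFun R ι).sum_repr x]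
  simp [LinearMap.sum_apply, productMul_single_single]

theorem productMul_single_left (P : Matrix ι (ι × ι) R) (i : ι) (y : ι → R) :
    productMul P (Pi.single i 1) y = ∑ l, y l • P.col (i, l) := by
  conv_lhs => rw [← (Pi.basisFun R ι).sum_repr y]
  simp [productMul_single_single]

theorem isAssociativeProduct_iff_single (P : Matrix ι (ι × ι) R) :
    P.IsAssociativeProduct ↔
      ∀ i j k, productMul P (productMul P (Pi.single i 1) (Pi.single j 1)) (Pi.single k 1) =
        productMul P (Pi.single i 1) (productMul P (Pi.single j 1) (Pi.single k 1)) := by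
  set μ := productMul P
  set b := Pi.basisFun R ι
  refine ⟨fun h i j k => h _ _ _, fun h x y z => ?_⟩
  have basis_basis : ∀ i j z, μ (μ (b i) (b j)) z = μ (b i) (μ (b j) z) := fun i j =>
    LinearMap.congr_fun (b.ext (f₁ := μ (μ (b i) (b j))) (f₂ := μ (b i) ∘ₗ μ (b j))
      fun k => by simpa [b] using h i j k)
  have basis_left : ∀ i y z, μ (μ (b i) y) z = μ (b i) (μ y z) := fun i y z =>
    LinearMap.congr_fun (b.ext (f₁ := μ.flip z ∘ₗ μ (b i)) (f₂ := μ (b i) ∘ₗ μ.flip z)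
      fun j => by simpa using basis_basis i j z) y
  exact LinearMap.congr_fun (b.ext (f₁ := μ.flip z ∘ₗ μ.flip y) (f₂ := μ.flip (μ y z))
    fun i => by simpa using basis_left i y z) x

end Matrix

/-- `triternionTable … i j` is the coordinate vector of `e_i e_j`. -/
def triternionTable (a b c d e f p q r : ℝ) : Fin 3 → Fin 3 → Fin 3 → ℝ :=
  ![![![1, 0, 0], ![0, 1, 0], ![0, 0, 1]],
    ![![0, 1, 0], ![a, b, c], ![d, e, f]],
    ![![0, 0, 1], ![d, e, f], ![p, q, r]]]

def triternionMatrix (a b c d e f p q r : ℝ) : Matrix (Fin 3) (Fin 3 × Fin 3) ℝ :=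
  Matrix.of fun s ij => triternionTable a b c d e f p q r ij.1 ij.2 s

theorem triternionMatrix_isAssociativeProduct_iff (a b c d e f p q r : ℝ) :
    (triternionMatrix a b c d e f p q r).IsAssociativeProduct ↔
      (a = c * e + f ^ 2 - b * f - c * r ∧ d = c * q - e * f ∧
        p = e ^ 2 + f * q - b * q - e * r) := by
  simp only [isAssociativeProduct_iff_single, productMul_single_left, productMul_single_right,
    funext_iff, Fin.sum_univ_three]
  constructor
  · intro h
    have h₁ := h 1 1 2 1
    have h₂ := h 1 1 2 2
    have h₃ := h 2 2 1 1
    simp [triternionMatrix, triternionTable] at h₁ h₂ h₃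
    exact ⟨by linarith, by linarith, by linarith⟩
  · rintro ⟨rfl, rfl, rfl⟩ i j k s
    fin_cases i <;> fin_cases j <;> fin_cases k <;> fin_cases s <;>
      simp [triternionMatrix, triternionTable] <;> ring

/-- Associativity condition for triternions: the commutative unital 3-dimensional
algebra with `i₁² = (a,b,c)`, `i₁ i₂ = i₂ i₁ = (d,e,f)`, `i₂² = (p,q,r)` is
associative iff `a = ce + f² − bf − cr`, `d = cq − ef`, `p = e² + fq − bq − er`. -/
theorem triternion_associative_iff (a b c d e f p q r : ℝ)
    (P : Matrix (Fin 3) (Fin 3 × Fin 3) ℝ)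
    (hP : P = Matrix.of fun (s : Fin 3) (pr : Fin 3 × Fin 3) =>
      (![![![(1 : ℝ), 0, 0], ![0, 1, 0], ![0, 0, 1]],
         ![![(0 : ℝ), 1, 0], ![a, b, c], ![d, e, f]],
         ![![(0 : ℝ), 0, 1], ![d, e, f], ![p, q, r]]]) pr.1 pr.2 s) :
    ((∀ x y z : Fin 3 → ℝ,
        P.mulVec (fun pr : Fin 3 × Fin 3 =>
          P.mulVec (fun qr : Fin 3 × Fin 3 => x qr.1 * y qr.2) pr.1 * z pr.2) =
        P.mulVec (fun pr : Fin 3 × Fin 3 =>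
          x pr.1 * P.mulVec (fun qr : Fin 3 × Fin 3 => y qr.1 * z qr.2) pr.2)) ↔
      (a = c * e + f ^ 2 - b * f - c * r ∧ d = c * q - e * f ∧
        p = e ^ 2 + f * q - b * q - e * r)) := by
  subst hP
  exact triternionMatrix_isAssociativeProduct_iff a b c d e f p q r
end

section
/- For x₀ x₁ x₂ x₃ : ℝ, the quantity (x₀² − x₂²)² + (x₁² − x₃²)² + 2(x₀x₁ + x₂x₃)² + 2(x₀x₃ + x₁x₂)² equals 0 if and only if (x₀ = x₂ and x₁ = −x₃) or (x₀ = −x₂ and x₁ = x₃). Hence the zero set of the algebra A₃ is {(x₀,x₁,x₂,x₃) ∈ ℝ⁴ : (x₀ = x₂ ∧ x₁ = −x₃) ∨ (x₀ = −x₂ ∧ x₁ = x₃)}. -/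
theorem A3_charFun_eq_mul {R : Type*} [CommRing R] (x₀ x₁ x₂ x₃ : R) :
    (x₀ ^ 2 - x₂ ^ 2) ^ 2 + (x₁ ^ 2 - x₃ ^ 2) ^ 2 +
        2 * (x₀ * x₁ + x₂ * x₃) ^ 2 + 2 * (x₀ * x₃ + x₁ * x₂) ^ 2 =
      ((x₀ - x₂) ^ 2 + (x₁ + x₃) ^ 2) * ((x₀ + x₂) ^ 2 + (x₁ - x₃) ^ 2) := by
  ring

/-- Zero set of the 4-dimensional PHA `A₃`: its characteristic function vanishes iff
`(x₀ = x₂ ∧ x₁ = −x₃)` or `(x₀ = −x₂ ∧ x₁ = x₃)`. -/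
theorem A3_zero_set (x₀ x₁ x₂ x₃ : ℝ) :
    (x₀ ^ 2 - x₂ ^ 2) ^ 2 + (x₁ ^ 2 - x₃ ^ 2) ^ 2 +
        2 * (x₀ * x₁ + x₂ * x₃) ^ 2 + 2 * (x₀ * x₃ + x₁ * x₂) ^ 2 = 0 ↔
      ((x₀ = x₂ ∧ x₁ = -x₃) ∨ (x₀ = -x₂ ∧ x₁ = x₃)) := by
  rw [A3_charFun_eq_mul, mul_eq_zero,
    add_eq_zero_iff_of_nonneg (sq_nonneg _) (sq_nonneg _),
    add_eq_zero_iff_of_nonneg (sq_nonneg _) (sq_nonneg _)]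
  simp only [sq_eq_zero_iff, sub_eq_zero, add_eq_zero_iff_eq_neg]
end
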